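/- Let Γ be a ℤ^d-periodic graph with fundamental domain W = [n], and let w ∈ ℤ^{d+1} be such that F = N_w ⊂ ℝ^{d+1} is a proper vertical face of the generic Newton polytope N = N(D(z,λ)). Then there exists i ∈ [n] such that the facial polynomial D_w(z,λ) is independent of the potential variable v_i. -/

import Mathlib

open scoped Classical Polynomial

noncomputable section

/-- A `ℤ^d`-periodic graph (with no self-loops or multiple edges), given by a
fundamental domain `[n] = Fin n` together with, for each pair `i j` of vertices
of the fundamental domain, the finite set `edges i j ⊆ ℤ^d` of those `a` such
that there is an edge between the vertex `(i,0)` and the vertex `(j,a)`.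
The full vertex set is `Fin n × ℤ^d`, with `ℤ^d` acting by translation on the
second coordinate. -/
structure PeriodicGraph (d n : ℕ) where
  edges : Fin n → Fin n → Finset (Fin d → ℤ)
  symm : ∀ i j a, a ∈ edges i j ↔ -a ∈ edges j i
  no_loop : ∀ i, (0 : Fin d → ℤ) ∉ edges i i

namespace PeriodicGraph

variable {d n : ℕ}

/-- Vertices of the periodic graph: pairs `(i, a)` with `i` in the fundamental
domain and `a ∈ ℤ^d`. -/
abbrev Vertex (d n : ℕ) := Fin n × (Fin d → ℤ)

/-- Adjacency in the full `ℤ^d`-periodic graph. -/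
def Adj (G : PeriodicGraph d n) (u v : Vertex d n) : Prop :=
  (v.2 - u.2) ∈ G.edges u.1 v.1

/-- The periodic graph is connected. -/
def Connected (G : PeriodicGraph d n) : Prop :=
  ∀ u v : Vertex d n, Relation.ReflTransGen G.Adj u v

/-- Directed edges (up to translation): triples `(i, j, a)` so that there is an
edge from `(i,0)` to `(j,a)`. -/
def DirEdge (G : PeriodicGraph d n) : Type :=
  {x : Fin n × Fin n × (Fin d → ℤ) // x.2.2 ∈ G.edges x.1 x.2.1}

/-- Reversal of a directed edge. -/
def flipEdge (G : PeriodicGraph d n) (x : G.DirEdge) : G.DirEdge :=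
  ⟨(x.1.2.1, x.1.1, -x.1.2.2), (G.symm _ _ _).mp x.2⟩

lemma flipEdge_flipEdge (G : PeriodicGraph d n) (x : G.DirEdge) :
    G.flipEdge (G.flipEdge x) = x := by
  obtain ⟨⟨i, j, a⟩, hx⟩ := x
  simp [flipEdge] <;> rfl

/-- The setoid identifying a directed edge with its reversal; an (undirected)
edge label variable `e_{(i,j),a} = e_{(j,i),-a}` corresponds to an equivalence
class. -/
def edgeSetoid (G : PeriodicGraph d n) : Setoid G.DirEdge where
  r x y := y = x ∨ y = G.flipEdge x
  iseqv := by
    constructor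
    · intro x; exact Or.inl rfl
    · rintro x y (rfl | rfl)
      · exact Or.inl rfl
      · right; rw [flipEdge_flipEdge]
    · rintro x y z (rfl | rfl) h
      · exact h
      · rcases h with rfl | rfl
        · exact Or.inr rfl
        · left; rw [flipEdge_flipEdge]

/-- Edge-label variables: unordered edges of the quotient graph. -/
abbrev EdgeVar (G : PeriodicGraph d n) : Type := Quotient G.edgeSetoid

/-- The index type for the variables of the labeling space `ℂ^{V,E}`:
one potential variable `v_i` for each vertex `i` of the fundamental domain,
and one edge-label variable for each (undirected) edge of the quotient. -/
abbrev VarIdx (G : PeriodicGraph d n) : Type := Fin n ⊕ G.EdgeVar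

/-- The labeling space `ℂ^{V,E}`. -/
abbrev Labeling (G : PeriodicGraph d n) : Type := G.VarIdx → ℂ

/-- The edge variable attached to a directed edge. -/
def edgeVar (G : PeriodicGraph d n) (i j : Fin n) (a : Fin d → ℤ)
    (h : a ∈ G.edges i j) : G.VarIdx :=
  Sum.inr (Quotient.mk G.edgeSetoid ⟨(i, j, a), h⟩)

/-- The ring `ℂ[z^{±1}]` of complex Laurent polynomials in `z = (z_1,…,z_d)`. -/
abbrev LaurentC (d : ℕ) : Type := AddMonoidAlgebra ℂ (Fin d → ℤ)

/-- The universal coefficient ring `ℂ[v,e]`: polynomials in the potential and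
edge-label variables. -/
abbrev CoeffRing (G : PeriodicGraph d n) : Type := MvPolynomial G.VarIdx ℂ

/-- Laurent polynomials in `z` with coefficients in `ℂ[v,e]`. -/
abbrev LaurentU (G : PeriodicGraph d n) : Type :=
  AddMonoidAlgebra G.CoeffRing (Fin d → ℤ)

/-- The Floquet matrix `L(z)` at a fixed labeling `x ∈ ℂ^{V,E}`:
`L(z)_{i,j} = δ_{ij} v_i + ∑_{a : (i,j+a) ∈ ℰ} e_{(i,j),a} z^a`. -/
def floquet (G : PeriodicGraph d n) (x : G.Labeling) :
    Matrix (Fin n) (Fin n) (LaurentC d) := fun i j =>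
  (if i = j then AddMonoidAlgebra.single 0 (x (Sum.inl i)) else 0) +
    ∑ a ∈ (G.edges i j).attach,
      AddMonoidAlgebra.single a.1 (x (G.edgeVar i j a.1 a.2))

/-- The universal Floquet matrix `L(z)`, with the potentials and edge labels
treated as indeterminates. -/
def floquetU (G : PeriodicGraph d n) :
    Matrix (Fin n) (Fin n) G.LaurentU := fun i j =>
  (if i = j then AddMonoidAlgebra.single 0 (MvPolynomial.X (Sum.inl i)) else 0) +
    ∑ a ∈ (G.edges i j).attach,
      AddMonoidAlgebra.single a.1 (MvPolynomial.X (G.edgeVar i j a.1 a.2))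

/-- The matrix `L(z) - λ I` at a fixed labeling, as a matrix of polynomials in
`λ` over `ℂ[z^{±1}]`. -/
def dispMat (G : PeriodicGraph d n) (x : G.Labeling) :
    Matrix (Fin n) (Fin n) (Polynomial (LaurentC d)) := fun i j =>
  Polynomial.C (G.floquet x i j) - if i = j then Polynomial.X else 0

/-- The universal matrix `L(z) - λ I`. -/
def dispMatU (G : PeriodicGraph d n) :
    Matrix (Fin n) (Fin n) (Polynomial G.LaurentU) := fun i j =>
  Polynomial.C (G.floquetU i j) - if i = j then Polynomial.X else 0

/-- The dispersion polynomial `D(z,λ) = det (L(z) - λ I)` at a fixed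
labeling, an element of `ℂ[z^{±1}][λ]`. -/
def disp (G : PeriodicGraph d n) (x : G.Labeling) : Polynomial (LaurentC d) :=
  (G.dispMat x).det

/-- The universal dispersion polynomial `D(v,e,z,λ) = det (L(z) - λ I)`,
an element of `ℂ[v,e][z^{±1}][λ]`. -/
def dispU (G : PeriodicGraph d n) : Polynomial G.LaurentU :=
  G.dispMatU.det

/-- `σD(z,λ) = ∏ i, (L(z) - λI)_{i, σ(i)}` at a fixed labeling. -/
def permProd (G : PeriodicGraph d n) (x : G.Labeling) (σ : Equiv.Perm (Fin n)) :
    Polynomial (LaurentC d) :=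
  ∏ i, G.dispMat x i (σ i)

/-- The universal `σD(v,e,z,λ) = ∏ i, (L(z) - λI)_{i, σ(i)}`. -/
def permProdU (G : PeriodicGraph d n) (σ : Equiv.Perm (Fin n)) :
    Polynomial G.LaurentU :=
  ∏ i, G.dispMatU i (σ i)

/-- The support `𝒜(g) ⊆ ℤ^d × ℕ` of `g ∈ ℂ[z^{±1}][λ]`: the set of pairs
`(a, b)` such that the monomial `z^a λ^b` has nonzero coefficient. -/
def suppC (g : Polynomial (LaurentC d)) : Set ((Fin d → ℤ) × ℕ) :=
  {p | (g.coeff p.2).coeff p.1 ≠ 0}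

/-- The generic support `A(f) ⊆ ℤ^d × ℕ` of `f ∈ ℂ[v,e][z^{±1}][λ]`: the set
of `(a,b)` such that the coefficient `c_{a,b}(v,e)` of `z^a λ^b` is a nonzero
polynomial in `(v,e)` (equivalently, such that `(a,b)` is in the support of the
specialization of `f` at a generic labeling). -/
def genSupp {G : PeriodicGraph d n} (f : Polynomial G.LaurentU) :
    Set ((Fin d → ℤ) × ℕ) :=
  {p | (f.coeff p.2).coeff p.1 ≠ 0}

/-- The full support `𝒜(f) ⊆ ℤ^d × ℕ × ℕ^{V,E}` of `f ∈ ℂ[v,e][z^{±1}][λ]`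
as a polynomial in all the variables `z, λ, v, e`: the set of triples
`(r₁, r₂, r₃)` such that the monomial `z^{r₁} λ^{r₂} (v,e)^{r₃}` appears in `f`
with nonzero coefficient. -/
def fullSupp {G : PeriodicGraph d n} (f : Polynomial G.LaurentU) :
    Set ((Fin d → ℤ) × ℕ × (G.VarIdx →₀ ℕ)) :=
  {r | MvPolynomial.coeff r.2.2 ((f.coeff r.2.1).coeff r.1) ≠ 0}

/-- The embedding `ℤ^d × ℕ → ℝ^{d+1}` of exponent vectors. -/
def toPt (p : (Fin d → ℤ) × ℕ) : (Fin d → ℝ) × ℝ :=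
  (fun i => (p.1 i : ℝ), (p.2 : ℝ))

/-- The generic Newton polytope `N(f) ⊆ ℝ^{d+1}` of `f ∈ ℂ[v,e][z^{±1}][λ]`:
the convex hull of the generic support. -/
def newton {G : PeriodicGraph d n} (f : Polynomial G.LaurentU) :
    Set ((Fin d → ℝ) × ℝ) :=
  convexHull ℝ (toPt '' genSupp f)

/-- The pairing `w · p` of a weight `w ∈ ℤ^{d+1}` with an exponent vector
`p ∈ ℤ^d × ℕ`. -/
def dotZ (w : (Fin d → ℤ) × ℤ) (p : (Fin d → ℤ) × ℕ) : ℤ :=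
  (∑ i, w.1 i * p.1 i) + w.2 * (p.2 : ℤ)

/-- The pairing `w · q` of a weight `w ∈ ℤ^{d+1}` with a point `q ∈ ℝ^{d+1}`. -/
def dotR (w : (Fin d → ℤ) × ℤ) (q : (Fin d → ℝ) × ℝ) : ℝ :=
  (∑ i, (w.1 i : ℝ) * q.1 i) + (w.2 : ℝ) * q.2

/-- The face `N(f)_w` of the generic Newton polytope identified by the weight
`w`: the set of points of `N(f)` on which `w · ·` is minimized. -/
def face {G : PeriodicGraph d n} (f : Polynomial G.LaurentU)
    (w : (Fin d → ℤ) × ℤ) : Set ((Fin d → ℝ) × ℝ) :=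
  {q ∈ newton f | ∀ q' ∈ newton f, dotR w q ≤ dotR w q'}

/-- A set in `ℝ^{d+1}` is vertical if it contains two points `(a,b)` and
`(a,c)` with `b ≠ c`. -/
def IsVertical (F : Set ((Fin d → ℝ) × ℝ)) : Prop :=
  ∃ (a : Fin d → ℝ) (b c : ℝ), b ≠ c ∧ (a, b) ∈ F ∧ (a, c) ∈ F

/-- A set in `ℝ^{d+1}` is a vertical segment if it is a (one-dimensional)
segment and is vertical. -/
def IsVerticalSegment (F : Set ((Fin d → ℝ) × ℝ)) : Prop :=
  (∃ p q : (Fin d → ℝ) × ℝ, p ≠ q ∧ F = segment ℝ p q) ∧ IsVertical F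

/-- `U ⊆ [n]` is a component of the fundamental domain: no edge of `Γ` joins
the `ℤ^d`-orbit of `U` to the `ℤ^d`-orbit of its complement. -/
def IsComponent (G : PeriodicGraph d n) (U : Set (Fin n)) : Prop :=
  ∀ i ∈ U, ∀ j, j ∉ U → G.edges i j = ∅

/-- A fundamental domain of `Γ` is determined by shifts `t i ∈ ℤ^d` of the
vertices of the standard fundamental domain (it is `{(i, t i) : i ∈ [n]}`).
`SupportZeroOn G t U` says that the subset `{(i, t i) : i ∈ U}` of that
fundamental domain has support `0`: every edge between the orbits of vertices
of `U` joins `(i, t i)` to `(j, t j)` with shift `a = 0`. -/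
def SupportZeroOn (G : PeriodicGraph d n) (t : Fin n → (Fin d → ℤ))
    (U : Set (Fin n)) : Prop :=
  ∀ i ∈ U, ∀ j ∈ U, ∀ a ∈ G.edges i j, a = t j - t i

/-- `Γ` has a fundamental domain of support `0`. -/
def HasSupportZeroFD (G : PeriodicGraph d n) : Prop :=
  ∃ t : Fin n → (Fin d → ℤ), G.SupportZeroOn t Set.univ

/-- `Γ` has a fundamental domain with a nonempty component of support `0`. -/
def HasSupportZeroComponent (G : PeriodicGraph d n) : Prop :=
  ∃ (t : Fin n → (Fin d → ℤ)) (U : Set (Fin n)),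
    U.Nonempty ∧ G.IsComponent U ∧ G.SupportZeroOn t U

/-- A subset of the labeling space `ℂ^{V,E}` is algebraic if it is the common
zero locus of a family of polynomials in the variables `(v,e)`. -/
def IsAlgebraicSet {ι : Type*} (S : Set (ι → ℂ)) : Prop :=
  ∃ P : Set (MvPolynomial ι ℂ), S = {x | ∀ p ∈ P, MvPolynomial.eval x p = 0}

/-- A property of labelings holds generically if it holds outside some proper
algebraic subset of the labeling space (i.e., on a nonempty Zariski-open set). -/
def Generic {ι : Type*} (P : (ι → ℂ) → Prop) : Prop :=
  ∃ S : Set (ι → ℂ), IsAlgebraicSet S ∧ S ≠ Set.univ ∧ ∀ x ∉ S, P x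

/-- `g ∈ ℂ[z^{±1}][λ]` has a linear factor in `λ`. -/
def HasLinearFactor (g : Polynomial (LaurentC d)) : Prop :=
  ∃ lam : ℂ, (Polynomial.X - Polynomial.C (algebraMap ℂ (LaurentC d) lam)) ∣ g



/-- The dispersion polynomial `D|_U(z,λ) = det (L|_U(z) - λI)` of the induced
periodic operator on the induced subgraph `Γ_U`, for `U ⊆ [n]`, at a fixed
labeling (the Floquet matrix of the induced operator is the corresponding
principal submatrix of `L(z)`). -/
def dispSub (G : PeriodicGraph d n) (x : G.Labeling) (U : Finset (Fin n)) :
    Polynomial (LaurentC d) :=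
  (Matrix.det (fun i j : {i // i ∈ U} =>
    Polynomial.C (G.floquet x i.1 j.1) - if i = j then Polynomial.X else 0))

/-- Restriction of a Laurent polynomial to the monomials satisfying a
predicate. -/
def laurFilter (p : (Fin d → ℤ) → Prop) (g : LaurentC d) : LaurentC d :=
  AddMonoidAlgebra.ofCoeff (Finsupp.filter p g.coeff)

/-- The facial polynomial `g_w` of `g ∈ ℂ[z^{±1}][λ]`: the sum of the terms of
`g` whose exponent vectors minimize `w · ·` over the support of `g`. -/
def facialC (w : (Fin d → ℤ) × ℤ) (g : Polynomial (LaurentC d)) :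
    Polynomial (LaurentC d) :=
  ∑ b ∈ g.support,
    Polynomial.C (laurFilter
      (fun a => ∀ q ∈ suppC g, dotZ w (a, b) ≤ dotZ w q) (g.coeff b)) *
      Polynomial.X ^ b

/-- The monomial `z^a` in `ℂ[z^{±1}]`. -/
def zMon (a : Fin d → ℤ) : LaurentC d := AddMonoidAlgebra.single a 1

/-- The Sylvester matrix of two polynomials `f, g ∈ R[λ]` (with respect to
their natural degrees `s = deg f` and `t = deg g`): a `(t+s) × (t+s)` matrix
whose first `t` rows are the shifted coefficient sequences of `f` and whose
last `s` rows are the shifted coefficient sequences of `g`. -/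
def sylvester {R : Type*} [CommRing R] (f g : Polynomial R) :
    Matrix (Fin (g.natDegree + f.natDegree)) (Fin (g.natDegree + f.natDegree)) R :=
  fun r c =>
    if (r : ℕ) < g.natDegree then
      (if (r : ℕ) ≤ (c : ℕ) then f.coeff ((c : ℕ) - (r : ℕ)) else 0)
    else
      (if ((r : ℕ) - g.natDegree) ≤ (c : ℕ) then
        g.coeff ((c : ℕ) - ((r : ℕ) - g.natDegree)) else 0)

/-- The resultant of two polynomials in `λ`: the determinant of their
Sylvester matrix. -/
def resultant {R : Type*} [CommRing R] (f g : Polynomial R) : R :=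
  (sylvester f g).det

/-- The simplified quotient graph `S(Γ/ℤ^d)`: the finite simple graph on the
fundamental domain `[n]` with an edge between `i ≠ j` whenever some edge of `Γ`
joins the orbits of `i` and `j`. -/
def simpleQuotient (G : PeriodicGraph d n) : SimpleGraph (Fin n) where
  Adj i j := i ≠ j ∧ (G.edges i j).Nonempty
  symm := ⟨by
    rintro i j ⟨hij, a, ha⟩
    exact ⟨hij.symm, ⟨-a, (G.symm i j a).mp ha⟩⟩⟩
  loopless := ⟨fun i h => h.1 rfl⟩

/-- A property of potentials `(v_1,…,v_n) ∈ ℂ^n` holds generically if it holds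
outside a proper algebraic subset of `ℂ^n`. -/
def GenericPot (P : (Fin n → ℂ) → Prop) : Prop :=
  ∃ S : Set (Fin n → ℂ), IsAlgebraicSet S ∧ S ≠ Set.univ ∧ ∀ x ∉ S, P x

end PeriodicGraph

/-!
A vertical face forces the weight to be `w = (w', 0)`. By the Leibniz formula the monomials of
`D` are indexed by configurations: a permutation `σ` of `[n]` with a choice of one term of each
entry `(σ i, i)` of `L(z) - λI`. The variables of such a monomial determine the cycles of `σ`, hence
its sign, so monomials of distinct configurations never cancel. Transposing `L(z) - λI` shows that
the generic support is symmetric under `z ↦ z⁻¹`, so the minimum `m` of `w'` on it is negative when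
the face is proper.

If every `v_i` occurred in `D_w`, there would be configurations `x_i` of weight at most `m` in which
`i` carries its potential. The edge terms of `x_i` form vertex-disjoint cycles avoiding `i`, so all
of them together form a balanced multigraph of out-degree at most `n - 1`. By Hall's theorem it
splits into `n - 1` families of vertex-disjoint cycles, one of which has weight at most
`n m / (n - 1)`. That family is again a configuration, whence `m ≤ n m / (n - 1)` and `m ≥ 0`.
-/

theorem Finset.card_image_eq_card_image_of_iff {α β γ : Type*} [DecidableEq β] [DecidableEq γ]
    {s : Finset α} {f : α → β} {g : α → γ} (h : ∀ x ∈ s, ∀ y ∈ s, f x = f y ↔ g x = g y) :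
    (s.image f).card = (s.image g).card := by
  set pairs := s.image fun x => (f x, g x)
  have hfst : Set.InjOn Prod.fst (pairs : Set (β × γ)) := by
    rintro _ hp _ hq hpq
    obtain ⟨x, hx, rfl⟩ := Finset.mem_image.mp hp
    obtain ⟨y, hy, rfl⟩ := Finset.mem_image.mp hq
    exact Prod.ext hpq ((h x hx y hy).mp hpq)
  have hsnd : Set.InjOn Prod.snd (pairs : Set (β × γ)) := by
    rintro _ hp _ hq hpq
    obtain ⟨x, hx, rfl⟩ := Finset.mem_image.mp hp
    obtain ⟨y, hy, rfl⟩ := Finset.mem_image.mp hq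
    exact Prod.ext ((h x hx y hy).mpr hpq) hpq
  calc (s.image f).card = (pairs.image Prod.fst).card := by rw [Finset.image_image]; rfl
    _ = (pairs.image Prod.snd).card := by
      rw [Finset.card_image_of_injOn hfst, Finset.card_image_of_injOn hsnd]
    _ = (s.image g).card := by rw [Finset.image_image]; rfl

namespace Equiv.Perm

variable {α : Type*} [Fintype α] [DecidableEq α]

theorem cycleFactorsFinset_eq_image_cycleOf (σ : Perm α) :
    σ.cycleFactorsFinset = σ.support.image σ.cycleOf := by
  ext γ
  rw [Finset.mem_image]
  constructor
  · intro hγ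
    obtain ⟨x, hx⟩ := (mem_cycleFactorsFinset_iff.mp hγ).1.nonempty_support
    exact ⟨x, mem_cycleFactorsFinset_support_le hγ hx, (cycle_is_cycleOf hx hγ).symm⟩
  · rintro ⟨x, hx, rfl⟩
    exact cycleOf_mem_cycleFactorsFinset_iff.mpr hx

theorem mem_support_iff_exists_sameCycle {σ : Perm α} {x : α} :
    x ∈ σ.support ↔ ∃ y, σ.SameCycle x y ∧ y ≠ x :=
  ⟨fun hx => ⟨σ x, sameCycle_apply_right.mpr .rfl, mem_support.mp hx⟩,
    fun ⟨_, hxy, hne⟩ => mem_support.mpr fun hfix => hne (hxy.eq_of_left hfix).symm⟩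

theorem sign_eq_sign_of_sameCycle_iff {σ τ : Perm α}
    (h : ∀ x y, σ.SameCycle x y ↔ τ.SameCycle x y) : sign σ = sign τ := by
  have hsupp : σ.support = τ.support := by
    ext x
    simp only [mem_support_iff_exists_sameCycle, h]
  have hcycles : σ.cycleFactorsFinset.card = τ.cycleFactorsFinset.card := by
    rw [cycleFactorsFinset_eq_image_cycleOf, cycleFactorsFinset_eq_image_cycleOf, hsupp]
    refine Finset.card_image_eq_card_image_of_iff fun x hx y hy => ?_
    rw [← sameCycle_iff_cycleOf_eq_of_mem_support (hsupp ▸ hx) (hsupp ▸ hy), h,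
      sameCycle_iff_cycleOf_eq_of_mem_support hx hy]
  rw [sign_of_cycleType, sign_of_cycleType, sum_cycleType, sum_cycleType, cycleType_def,
    cycleType_def, Multiset.card_map, Multiset.card_map, hsupp]
  exact congrArg _ (congrArg _ hcycles)

theorem sameCycle_iff_reflTransGen {β : Type*} [Finite β] {σ : Perm β}
    {r : β → β → Prop} (hstep : ∀ x, Relation.ReflTransGen r x (σ x))
    (hr : ∀ x y, r x y → σ.SameCycle x y) {x y : β} :
    σ.SameCycle x y ↔ Relation.ReflTransGen r x y := by
  refine ⟨fun hxy => ?_, fun h => ?_⟩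
  · obtain ⟨i, -, rfl⟩ := hxy.exists_pow_eq'
    induction i with
    | zero => exact .refl
    | succ i ih =>
      rw [pow_succ', Perm.mul_apply]
      exact (ih ⟨i, by simp⟩).trans (hstep _)
  · induction h with
    | refl => exact .rfl
    | tail _ hyz ih => exact ih.trans (hr _ _ hyz)

end Equiv.Perm

lemma AddMonoidHom.map_tsub_of_le {α : Type*} [DecidableEq α] (φ : Multiset α →+ ℕ)
    {M N : Multiset α} (h : N ≤ M) : φ (M - N) = φ M - φ N := by
  conv_rhs => rw [← tsub_add_cancel_of_le h]
  rw [map_add, add_tsub_cancel_right]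

lemma Multiset.sum_count_map_eq_card_filter {α V : Type*} (f : α → V) (A : Finset V)
    (M : Multiset α) :
    ∑ v ∈ A, (M.map f).count v = Multiset.card (M.filter fun a => f a ∈ A) := by
  rw [← Multiset.card_map f, show (M.filter fun a => f a ∈ A).map f = (M.map f).filter (· ∈ A)
    by rw [Multiset.filter_map]; rfl,
    ← Multiset.sum_count_eq_card (s := A) fun a ha => (Multiset.mem_filter.mp ha).2]
  exact Finset.sum_congr rfl fun v hv => (Multiset.count_filter_of_pos hv).symm

namespace Arcs

variable {V L : Type*}

def outDeg (v : V) : Multiset (V × V × L) →+ ℕ :=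
  (Multiset.countAddMonoidHom v).comp (Multiset.mapAddMonoidHom Prod.fst)

def inDeg (v : V) : Multiset (V × V × L) →+ ℕ :=
  (Multiset.countAddMonoidHom v).comp (Multiset.mapAddMonoidHom fun a => a.2.1)

def Balanced (M : Multiset (V × V × L)) : Prop := ∀ v, outDeg v M = inDeg v M

def labelSum [AddCommMonoid L] : Multiset (V × V × L) →+ L :=
  Multiset.sumAddMonoidHom.comp (Multiset.mapAddMonoidHom fun a => a.2.2)

lemma outDeg_apply (v : V) (M : Multiset (V × V × L)) :
    outDeg v M = (M.map Prod.fst).count v := rfl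

lemma inDeg_apply (v : V) (M : Multiset (V × V × L)) :
    inDeg v M = (M.map fun a => a.2.1).count v := rfl

lemma Balanced.sub {M N : Multiset (V × V × L)} (hM : Balanced M) (hN : Balanced N) (h : N ≤ M) :
    Balanced (M - N) := fun v => by
  rw [(outDeg v).map_tsub_of_le h, (inDeg v).map_tsub_of_le h, hM v, hN v]

lemma balanced_sum {ι : Type*} (s : Finset ι) {M : ι → Multiset (V × V × L)}
    (h : ∀ i ∈ s, Balanced (M i)) : Balanced (∑ i ∈ s, M i) := fun v => by
  rw [map_sum, map_sum]
  exact Finset.sum_congr rfl fun i hi => h i hi v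

lemma eq_zero_of_outDeg_eq_zero {M : Multiset (V × V × L)} (h : ∀ v, outDeg v M = 0) : M = 0 :=
  Multiset.eq_zero_of_forall_notMem fun a ha =>
    Multiset.count_eq_zero.mp (h a.1) (Multiset.mem_map_of_mem _ ha)

end Arcs

open Arcs

/-- A union of vertex-disjoint directed cycles through the vertices of `carrier` (loops allowed),
the arc leaving `v` going to `perm v` and carrying the label `label v`. -/
structure CycleCover (V L : Type*) where
  perm : Equiv.Perm V
  carrier : Finset V
  label : V → L
  perm_eq_self : ∀ v ∉ carrier, perm v = v

namespace CycleCover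

variable {V L : Type*}

section

variable (K : CycleCover V L)

def arcs : Multiset (V × V × L) := K.carrier.val.map fun v => (v, K.perm v, K.label v)

lemma perm_mem_carrier_iff {v : V} : K.perm v ∈ K.carrier ↔ v ∈ K.carrier := by
  refine ⟨fun h => ?_, fun h => ?_⟩
  · by_contra hv
    exact hv (K.perm_eq_self v hv ▸ h)
  · by_contra hv
    rw [K.perm.injective (K.perm_eq_self _ hv)] at hv
    exact hv h

lemma nodup_arcs : K.arcs.Nodup :=
  K.carrier.nodup.map fun _ _ h => congrArg Prod.fst h

lemma outDeg_arcs (v : V) : outDeg v K.arcs = if v ∈ K.carrier then 1 else 0 := by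
  rw [outDeg_apply, arcs, Multiset.map_map]
  exact (congrArg (Multiset.count v) (Multiset.map_id' _)).trans
    (Multiset.count_eq_of_nodup K.carrier.nodup)

lemma inDeg_arcs (v : V) : inDeg v K.arcs = if v ∈ K.carrier then 1 else 0 := by
  rw [inDeg_apply, arcs, Multiset.map_map]
  conv_lhs => rw [← K.perm.apply_symm_apply v]
  rw [show ((fun a : V × V × L => a.2.1) ∘ fun u => (u, K.perm u, K.label u)) = K.perm from rfl,
    Multiset.count_map_eq_count' _ _ K.perm.injective, Multiset.count_eq_of_nodup K.carrier.nodup]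
  have hmem : K.perm.symm v ∈ K.carrier ↔ v ∈ K.carrier := by
    rw [← K.perm_mem_carrier_iff, Equiv.apply_symm_apply]
  simp only [Finset.mem_val, hmem]

lemma balanced_arcs : Balanced K.arcs := fun v => by rw [outDeg_arcs, inDeg_arcs]

lemma labelSum_arcs [AddCommMonoid L] : labelSum K.arcs = ∑ v ∈ K.carrier, K.label v := by
  simp [labelSum, arcs, Multiset.map_map]

end

variable [Fintype V]

/-- A vertex of out-degree at most `r` may be matched to itself, i.e. left out of the cover. -/
def hallTargets (r : ℕ) (M : Multiset (V × V × L)) (v : V) : Finset V :=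
  Finset.univ.filter fun u => (∃ l, (v, u, l) ∈ M) ∨ (u = v ∧ outDeg v M ≤ r)

lemma card_le_card_biUnion_hallTargets {r : ℕ} {M : Multiset (V × V × L)} (hM : Balanced M)
    (hdeg : ∀ v, outDeg v M ≤ r + 1) (A : Finset V) :
    A.card ≤ (A.biUnion (hallTargets r M)).card := by
  set B := A.biUnion (hallTargets r M)
  have hAB : ∀ v ∈ A, ∀ u ∈ hallTargets r M v, u ∈ B :=
    fun v hv u hu => Finset.mem_biUnion.mpr ⟨v, hv, hu⟩
  have harcs : ∑ v ∈ A, outDeg v M ≤ ∑ u ∈ B, outDeg u M := calc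
    ∑ v ∈ A, outDeg v M = Multiset.card (M.filter fun a => a.1 ∈ A) :=
      Multiset.sum_count_map_eq_card_filter _ _ _
    _ ≤ Multiset.card (M.filter fun a => a.2.1 ∈ B) := by
      refine Multiset.card_le_card (Multiset.le_filter.mpr ⟨Multiset.filter_le _ _, fun a ha => ?_⟩)
      obtain ⟨haM, haA⟩ := Multiset.mem_filter.mp ha
      exact hAB a.1 haA a.2.1 (Finset.mem_filter.mpr ⟨Finset.mem_univ _, Or.inl ⟨a.2.2, haM⟩⟩)
    _ = ∑ u ∈ B, inDeg u M := (Multiset.sum_count_map_eq_card_filter _ _ _).symm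
    _ = ∑ u ∈ B, outDeg u M := Finset.sum_congr rfl fun u _ => (hM u).symm
  have hdefect : ∑ v ∈ A, (r + 1 - outDeg v M) ≤ ∑ u ∈ B, (r + 1 - outDeg u M) := by
    rw [← Finset.sum_filter_ne_zero]
    refine Finset.sum_le_sum_of_subset fun v hv => ?_
    obtain ⟨hvA, hv⟩ := Finset.mem_filter.mp hv
    exact hAB v hvA v (Finset.mem_filter.mpr ⟨Finset.mem_univ _, Or.inr ⟨rfl, by omega⟩⟩)
  have hsum : ∀ s : Finset V,
      ∑ v ∈ s, outDeg v M + ∑ v ∈ s, (r + 1 - outDeg v M) = (r + 1) * s.card := fun s => by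
    rw [← Finset.sum_add_distrib, Finset.sum_congr rfl fun v _ => Nat.add_sub_cancel' (hdeg v),
      Finset.sum_const, smul_eq_mul, mul_comm]
  exact Nat.le_of_mul_le_mul_left (by rw [← hsum, ← hsum]; omega) r.succ_pos

/-- König's argument: a system of distinct representatives of `hallTargets` is a cycle cover
through every vertex of maximal out-degree. -/
theorem exists_arcs_le_outDeg_sub_le [Nonempty L] {r : ℕ} {M : Multiset (V × V × L)}
    (hM : Balanced M) (hdeg : ∀ v, outDeg v M ≤ r + 1) :
    ∃ K : CycleCover V L, K.arcs ≤ M ∧ ∀ v, outDeg v (M - K.arcs) ≤ r := by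
  obtain ⟨f, hf, hft⟩ := (Finset.all_card_le_biUnion_card_iff_exists_injective _).mp
    (card_le_card_biUnion_hallTargets hM hdeg)
  set S := Finset.univ.filter fun v => f v ≠ v ∨ r < outDeg v M
  have hS : ∀ v ∈ S, ∃ l, (v, f v, l) ∈ M := by
    intro v hv
    have hfv := hft v
    simp only [hallTargets, S, Finset.mem_filter, Finset.mem_univ, true_and] at hfv hv
    rcases hfv with h | ⟨h1, h2⟩
    · exact h
    · exact absurd h2 (hv.resolve_left (not_not.mpr h1)).not_ge
  let K : CycleCover V L :=
    { perm := Equiv.ofBijective f (Finite.injective_iff_bijective.mp hf)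
      carrier := S
      label := fun v => if h : ∃ l, (v, f v, l) ∈ M then h.choose else Classical.arbitrary L
      perm_eq_self := fun v hv => by
        simp only [S, Finset.mem_filter, Finset.mem_univ, true_and, not_or, not_not] at hv
        exact hv.1 }
  have hKM : K.arcs ≤ M := by
    refine (Multiset.le_iff_subset K.nodup_arcs).mpr fun a ha => ?_
    obtain ⟨v, hv, rfl⟩ := Multiset.mem_map.mp ha
    have h := hS v hv
    simpa [K, dif_pos h] using h.choose_spec
  refine ⟨K, hKM, fun v => ?_⟩
  rw [(outDeg v).map_tsub_of_le hKM, K.outDeg_arcs]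
  have := hdeg v
  split_ifs with hv <;> simp only [K, S, Finset.mem_filter, Finset.mem_univ, true_and] at hv <;>
    omega

theorem exists_mul_le [Nonempty L] (φ : Multiset (V × V × L) →+ ℤ) :
    ∀ (r : ℕ) {M : Multiset (V × V × L)}, Balanced M → (∀ v, outDeg v M ≤ r) →
      ∃ K : CycleCover V L, K.arcs ≤ M ∧ r * φ K.arcs ≤ φ M
  | 0, M, _, hdeg =>
    ⟨⟨1, ∅, fun _ => Classical.arbitrary L, fun _ _ => rfl⟩, by simp [arcs],
      by simp [eq_zero_of_outDeg_eq_zero fun v => Nat.le_zero.mp (hdeg v)]⟩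
  | r + 1, M, hM, hdeg => by
    obtain ⟨K₁, hK₁M, hdeg₁⟩ := exists_arcs_le_outDeg_sub_le hM hdeg
    obtain ⟨K₂, hK₂M, hK₂⟩ := exists_mul_le φ r (hM.sub K₁.balanced_arcs hK₁M) hdeg₁
    have hsplit : φ M = φ (M - K₁.arcs) + φ K₁.arcs := by
      rw [← map_add, tsub_add_cancel_of_le hK₁M]
    rcases le_total (φ K₂.arcs) (φ K₁.arcs) with h | h
    · exact ⟨K₂, hK₂M.trans tsub_le_self, by push_cast; linarith⟩
    · exact ⟨K₁, hK₁M, by push_cast; nlinarith [mul_le_mul_of_nonneg_left h r.cast_nonneg]⟩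

lemma outDeg_sum_arcs_le (K : V → CycleCover V L) (hK : ∀ v, v ∉ (K v).carrier) (v : V) :
    outDeg v (∑ u, (K u).arcs) ≤ Fintype.card V - 1 := by
  rw [map_sum, ← Finset.sum_erase _ (by rw [outDeg_arcs, if_neg (hK v)]),
    ← Finset.card_univ, ← Finset.card_erase_of_mem (Finset.mem_univ v)]
  refine (Finset.sum_le_card_nsmul _ _ 1 fun u _ => ?_).trans (by simp)
  rw [outDeg_arcs]
  split_ifs <;> simp

end CycleCover

namespace PeriodicGraph

variable {d n : ℕ}

section NewtonPolytope

lemma isLinearMap_dotR (w : (Fin d → ℤ) × ℤ) : IsLinearMap ℝ (dotR w) where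
  map_add p q := by
    simp only [dotR, Prod.fst_add, Prod.snd_add, Pi.add_apply, mul_add, Finset.sum_add_distrib]
    ring
  map_smul c p := by
    simp only [dotR, Prod.smul_fst, Prod.smul_snd, Pi.smul_apply, smul_eq_mul, mul_add,
      Finset.mul_sum, mul_left_comm (c : ℝ)]

lemma dotR_toPt (w : (Fin d → ℤ) × ℤ) (p : (Fin d → ℤ) × ℕ) :
    dotR w (toPt p) = dotZ w p := by
  simp only [dotR, toPt, dotZ]
  push_cast
  ring

variable {G : PeriodicGraph d n} {f : Polynomial G.LaurentU} {w : (Fin d → ℤ) × ℤ}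

lemma dotZ_of_snd_eq_zero (hw : w.2 = 0) (p : (Fin d → ℤ) × ℕ) : dotZ w p = w.1 ⬝ᵥ p.1 := by
  simp [dotZ, hw, dotProduct]

lemma face_eq_newton_of_forall_dotZ_eq {m : ℤ} (h : ∀ p ∈ genSupp f, dotZ w p = m) :
    face f w = newton f := by
  have hsub : newton f ⊆ {q | dotR w q = m} := by
    refine convexHull_min ?_ (convex_hyperplane (isLinearMap_dotR w) _)
    rintro _ ⟨p, hp, rfl⟩
    simp [dotR_toPt, h p hp]
  exact subset_antisymm (fun q hq => hq.1)
    fun q hq => ⟨hq, fun q' hq' => ((hsub hq).trans (hsub hq').symm).le⟩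

lemma snd_eq_zero_of_isVertical_face (h : IsVertical (face f w)) : w.2 = 0 := by
  obtain ⟨a, b, c, hbc, hb, hc⟩ := h
  have heq : dotR w (a, b) = dotR w (a, c) := le_antisymm (hb.2 _ hc.1) (hc.2 _ hb.1)
  simp only [dotR, add_right_inj] at heq
  by_contra hw
  exact hbc (mul_left_cancel₀ (by exact_mod_cast hw) heq)

lemma mem_genSupp_iff_exists_mem_fullSupp {p : (Fin d → ℤ) × ℕ} :
    p ∈ genSupp f ↔ ∃ μ, (p.1, p.2, μ) ∈ fullSupp f :=
  MvPolynomial.ne_zero_iff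

end NewtonPolytope

/-- The monomials of the entries of `L(z) - λI`: `-λ` and the potential on the diagonal, and the
edge terms `e z^a`. -/
inductive EntryTerm (d : ℕ)
  | negLambda
  | potential
  | edge (a : Fin d → ℤ)

namespace EntryTerm

def zExp : EntryTerm d → (Fin d → ℤ)
  | edge a => a
  | _ => 0

def lamExp : EntryTerm d → ℕ
  | negLambda => 1
  | _ => 0

def IsEdge : EntryTerm d → Prop
  | edge _ => True
  | _ => False

def neg : EntryTerm d → EntryTerm d
  | edge a => edge (-a)
  | t => t

end EntryTerm

open EntryTerm

section Expansion

variable (G : PeriodicGraph d n)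

def IsEntryTerm (j i : Fin n) : EntryTerm d → Prop
  | negLambda | potential => j = i
  | edge a => a ∈ G.edges j i

def entryTerms (j i : Fin n) : Finset (EntryTerm d) :=
  (G.edges j i).image edge ∪ if j = i then {negLambda, potential} else ∅

lemma mem_entryTerms {j i : Fin n} {t : EntryTerm d} :
    t ∈ G.entryTerms j i ↔ G.IsEntryTerm j i t := by
  cases t <;> by_cases h : j = i <;> simp [entryTerms, IsEntryTerm, h]

def entryVarExp (j i : Fin n) : EntryTerm d → (G.VarIdx →₀ ℕ)
  | negLambda => 0
  | potential => Finsupp.single (Sum.inl i) 1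
  | edge a => if h : a ∈ G.edges j i then Finsupp.single (G.edgeVar j i a h) 1 else 0

/-- The monomial `s λ^k z^a (v,e)^μ`. -/
def monomialU (k : ℕ) (a : Fin d → ℤ) (μ : G.VarIdx →₀ ℕ) (s : ℂ) : Polynomial G.LaurentU :=
  Polynomial.monomial k (AddMonoidAlgebra.single a (MvPolynomial.monomial μ s))

lemma monomialU_mul (k k' : ℕ) (a a' : Fin d → ℤ) (μ μ' : G.VarIdx →₀ ℕ) (s s' : ℂ) :
    G.monomialU k a μ s * G.monomialU k' a' μ' s' =
      G.monomialU (k + k') (a + a') (μ + μ') (s * s') := by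
  simp only [monomialU, Polynomial.monomial_mul_monomial, AddMonoidAlgebra.single_mul_single,
    MvPolynomial.monomial_mul]

lemma monomialU_zero_one : G.monomialU 0 0 0 1 = 1 := by
  rw [monomialU, MvPolynomial.monomial_zero', map_one, ← AddMonoidAlgebra.one_def,
    Polynomial.monomial_zero_one]

lemma monomialU_one_neg_one : G.monomialU 1 0 0 (-1) = -Polynomial.X := by
  rw [monomialU, MvPolynomial.monomial_zero', map_neg, map_one, AddMonoidAlgebra.single_neg,
    ← AddMonoidAlgebra.one_def, map_neg, Polynomial.monomial_one_one_eq_X]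

lemma prod_monomialU {ι : Type*} (s : Finset ι) (k : ι → ℕ) (a : ι → Fin d → ℤ)
    (μ : ι → G.VarIdx →₀ ℕ) (c : ι → ℂ) :
    ∏ i ∈ s, G.monomialU (k i) (a i) (μ i) (c i) =
      G.monomialU (∑ i ∈ s, k i) (∑ i ∈ s, a i) (∑ i ∈ s, μ i) (∏ i ∈ s, c i) := by
  induction s using Finset.induction with
  | empty => exact (G.monomialU_zero_one).symm
  | insert i s hi ih => simp only [Finset.prod_insert hi, Finset.sum_insert hi, ih, monomialU_mul]

lemma coeff_coeff_monomialU (k : ℕ) (a : Fin d → ℤ) (μ : G.VarIdx →₀ ℕ) (s : ℂ) (b : ℕ)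
    (a' : Fin d → ℤ) (μ' : G.VarIdx →₀ ℕ) :
    MvPolynomial.coeff μ' (((G.monomialU k a μ s).coeff b).coeff a') =
      if k = b ∧ a = a' ∧ μ = μ' then s else 0 := by
  simp only [monomialU, Polynomial.coeff_monomial]
  by_cases hk : k = b <;> by_cases ha : a = a' <;> simp [hk, ha, MvPolynomial.coeff_monomial]

def entryPoly (j i : Fin n) (t : EntryTerm d) : Polynomial G.LaurentU :=
  G.monomialU t.lamExp t.zExp (G.entryVarExp j i t) ((-1) ^ t.lamExp)

lemma dispMatU_eq_sum_entryPoly (j i : Fin n) :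
    G.dispMatU j i = ∑ t ∈ G.entryTerms j i, G.entryPoly j i t := by
  have hdisj : Disjoint ((G.edges j i).image edge)
      (if j = i then ({negLambda, potential} : Finset (EntryTerm d)) else ∅) := by
    split_ifs <;> simp [Finset.disjoint_left]
  have hedges : ∑ t ∈ (G.edges j i).image edge, G.entryPoly j i t =
      Polynomial.C (∑ a ∈ (G.edges j i).attach,
        AddMonoidAlgebra.single a.1 (MvPolynomial.X (G.edgeVar j i a.1 a.2))) := by
    rw [Finset.sum_image fun _ _ _ _ h => EntryTerm.edge.inj h, map_sum,
      ← Finset.sum_attach (G.edges j i)]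
    refine Finset.sum_congr rfl fun a _ => ?_
    simp [entryPoly, monomialU, entryVarExp, zExp, lamExp, a.2, MvPolynomial.X]
  rw [entryTerms, Finset.sum_union hdisj, hedges, dispMatU, floquetU]
  split_ifs with h
  · subst h
    rw [Finset.sum_pair (by simp), entryPoly, entryPoly]
    simp only [zExp, lamExp, entryVarExp, pow_one, pow_zero, monomialU_one_neg_one]
    simp only [monomialU, Polynomial.monomial_zero_left, MvPolynomial.X, map_add]
    ring
  · simp only [Finset.sum_empty, add_zero, zero_add]
    ring

end Expansion

/-- A term of the Leibniz expansion of `det (L(z) - λI)`: a permutation `σ` and a term of each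
entry `(σ i, i)`. -/
abbrev Config (d n : ℕ) : Type := (_ : Equiv.Perm (Fin n)) × (Fin n → EntryTerm d)

namespace Config

def zExp (x : Config d n) : Fin d → ℤ := ∑ i, (x.2 i).zExp

def lamExp (x : Config d n) : ℕ := ∑ i, (x.2 i).lamExp

def coeff (x : Config d n) : ℂ := ((Equiv.Perm.sign x.1 : ℤ) : ℂ) * (-1) ^ x.lamExp

lemma coeff_ne_zero (x : Config d n) : x.coeff ≠ 0 := by
  rcases Int.units_eq_one_or (Equiv.Perm.sign x.1) with h | h <;> simp [coeff, h]

end Config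

section Configurations

variable (G : PeriodicGraph d n)

def varExp (x : Config d n) : G.VarIdx →₀ ℕ := ∑ i, G.entryVarExp (x.1 i) i (x.2 i)

def configs : Finset (Config d n) :=
  Finset.univ.sigma fun σ => Fintype.piFinset fun i => G.entryTerms (σ i) i

variable {G} in
lemma mem_configs {x : Config d n} : x ∈ G.configs ↔ ∀ i, G.IsEntryTerm (x.1 i) i (x.2 i) := by
  simp [configs, Fintype.mem_piFinset, mem_entryTerms]

lemma zsmul_monomialU (z : ℤ) (k : ℕ) (a : Fin d → ℤ) (μ : G.VarIdx →₀ ℕ) (s : ℂ) :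
    z • G.monomialU k a μ s = G.monomialU k a μ (z * s) := by
  simp [monomialU, Polynomial.smul_monomial, MvPolynomial.smul_monomial, zsmul_eq_mul]

lemma dispU_eq_sum_configs :
    G.dispU = ∑ x ∈ G.configs, G.monomialU x.lamExp x.zExp (G.varExp x) x.coeff := by
  rw [dispU, Matrix.det_apply, configs, Finset.sum_sigma]
  refine Finset.sum_congr rfl fun σ _ => ?_
  simp_rw [dispMatU_eq_sum_entryPoly]
  rw [Finset.prod_univ_sum (fun i => G.entryTerms (σ i) i) fun i t => G.entryPoly (σ i) i t,
    Finset.smul_sum]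
  refine Finset.sum_congr rfl fun c _ => ?_
  simp only [entryPoly]
  rw [prod_monomialU, Finset.prod_pow_eq_pow_sum, Units.smul_def, zsmul_monomialU]
  rfl

lemma coeff_coeff_dispU (b : ℕ) (a : Fin d → ℤ) (μ : G.VarIdx →₀ ℕ) :
    MvPolynomial.coeff μ ((G.dispU.coeff b).coeff a) =
      ∑ x ∈ G.configs with x.lamExp = b ∧ x.zExp = a ∧ G.varExp x = μ, x.coeff := by
  rw [dispU_eq_sum_configs, Polynomial.finsetSum_coeff, AddMonoidAlgebra.coeff_sum,
    Finset.sum_apply', MvPolynomial.coeff_sum, Finset.sum_filter]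
  exact Finset.sum_congr rfl fun x _ => G.coeff_coeff_monomialU _ _ _ _ _ _ _

lemma exists_config_of_mem_fullSupp {r : (Fin d → ℤ) × ℕ × (G.VarIdx →₀ ℕ)}
    (hr : r ∈ fullSupp G.dispU) :
    ∃ x ∈ G.configs, x.zExp = r.1 ∧ x.lamExp = r.2.1 ∧ G.varExp x = r.2.2 := by
  obtain ⟨x, hx, -⟩ :=
    Finset.exists_ne_zero_of_sum_ne_zero ((G.coeff_coeff_dispU _ _ _).symm.trans_ne hr)
  obtain ⟨hx, hb, ha, hμ⟩ := Finset.mem_filter.mp hx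
  exact ⟨x, hx, ha, hb, hμ⟩

end Configurations

section NoCancellation

variable (G : PeriodicGraph d n)

def VarAdj (μ : G.VarIdx →₀ ℕ) (u v : Fin n) : Prop :=
  ∃ e : G.DirEdge, μ (Sum.inr (Quotient.mk G.edgeSetoid e)) ≠ 0 ∧
    (e.1.1 = u ∧ e.1.2.1 = v ∨ e.1.1 = v ∧ e.1.2.1 = u)

variable {G}

lemma exists_edge_of_entryVarExp_inr_ne_zero {j i : Fin n} {t : EntryTerm d} {q : G.EdgeVar}
    (h : G.entryVarExp j i t (Sum.inr q) ≠ 0) :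
    ∃ a, ∃ ha : a ∈ G.edges j i, t = edge a ∧ Quotient.mk G.edgeSetoid ⟨(j, i, a), ha⟩ = q := by
  cases t with
  | negLambda => simp [entryVarExp] at h
  | potential => simp [entryVarExp] at h
  | edge a =>
    by_cases ha : a ∈ G.edges j i
    · refine ⟨a, ha, rfl, ?_⟩
      simp only [entryVarExp, dif_pos ha, Finsupp.single_apply, ne_eq, ite_eq_right_iff,
        Classical.not_imp] at h
      exact Sum.inr.inj h.1
    · simp [entryVarExp, ha] at h

lemma eq_potential_of_entryVarExp_inl_ne_zero {j i k : Fin n} {t : EntryTerm d}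
    (h : G.entryVarExp j i t (Sum.inl k) ≠ 0) : t = potential ∧ i = k := by
  cases t with
  | negLambda => simp [entryVarExp] at h
  | potential => simpa [entryVarExp, Finsupp.single_apply] using h
  | edge a => by_cases ha : a ∈ G.edges j i <;> simp [entryVarExp, ha, edgeVar] at h

lemma exists_entryVarExp_ne_zero {x : Config d n} {ν : G.VarIdx} (h : G.varExp x ν ≠ 0) :
    ∃ i, G.entryVarExp (x.1 i) i (x.2 i) ν ≠ 0 := by
  obtain ⟨i, -, hi⟩ :=
    Finset.exists_ne_zero_of_sum_ne_zero (by rwa [varExp, Finsupp.finsetSum_apply] at h)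
  exact ⟨i, hi⟩

lemma eq_potential_of_varExp_inl_ne_zero {x : Config d n} {i : Fin n}
    (h : G.varExp x (Sum.inl i) ≠ 0) : x.2 i = potential := by
  obtain ⟨j, hj⟩ := exists_entryVarExp_ne_zero h
  obtain ⟨hpot, rfl⟩ := eq_potential_of_entryVarExp_inl_ne_zero hj
  exact hpot

lemma entryVarExp_le_varExp (x : Config d n) (i : Fin n) :
    G.entryVarExp (x.1 i) i (x.2 i) ≤ G.varExp x :=
  Finset.single_le_sum (f := fun i => G.entryVarExp (x.1 i) i (x.2 i)) (fun _ _ => zero_le)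
    (Finset.mem_univ i)

lemma exists_edge_of_apply_ne_self {x : Config d n} (hx : x ∈ G.configs) {u : Fin n}
    (hu : x.1 u ≠ u) : ∃ a, x.2 u = edge a := by
  have h := mem_configs.mp hx u
  cases hxu : x.2 u with
  | edge a => exact ⟨a, rfl⟩
  | _ => rw [hxu] at h; exact absurd h hu

lemma sameCycle_iff_reflTransGen_varAdj {x : Config d n} (hx : x ∈ G.configs) {u v : Fin n} :
    x.1.SameCycle u v ↔ Relation.ReflTransGen (G.VarAdj (G.varExp x)) u v := by
  refine Equiv.Perm.sameCycle_iff_reflTransGen (fun u => ?_) (fun u v huv => ?_)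
  · by_cases hu : x.1 u = u
    · rw [hu]
    obtain ⟨a, ha⟩ := exists_edge_of_apply_ne_self hx hu
    have hmem : a ∈ G.edges (x.1 u) u := by simpa [ha, IsEntryTerm] using mem_configs.mp hx u
    refine .single ⟨⟨(x.1 u, u, a), hmem⟩, fun h0 => ?_, .inr ⟨rfl, rfl⟩⟩
    have hle := entryVarExp_le_varExp x u (G.edgeVar (x.1 u) u a hmem)
    simp [ha, entryVarExp, hmem, edgeVar] at hle h0
    omega
  · obtain ⟨e, he, hends⟩ := huv
    obtain ⟨i, hi⟩ := exists_entryVarExp_ne_zero he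
    obtain ⟨a, ha, -, hq⟩ := exists_edge_of_entryVarExp_inr_ne_zero hi
    have hcycle : x.1.SameCycle i (x.1 i) := ⟨1, rfl⟩
    rcases Quotient.exact hq with rfl | rfl <;>
      rcases hends with ⟨rfl, rfl⟩ | ⟨rfl, rfl⟩
    exacts [hcycle.symm, hcycle, hcycle, hcycle.symm]

lemma coeff_eq_of_varExp_eq {x y : Config d n} (hx : x ∈ G.configs) (hy : y ∈ G.configs)
    (hlam : x.lamExp = y.lamExp) (hvar : G.varExp x = G.varExp y) : x.coeff = y.coeff := by
  have hsign : Equiv.Perm.sign x.1 = Equiv.Perm.sign y.1 :=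
    Equiv.Perm.sign_eq_sign_of_sameCycle_iff fun u v => by
      rw [sameCycle_iff_reflTransGen_varAdj hx, hvar, ← sameCycle_iff_reflTransGen_varAdj hy]
  rw [Config.coeff, Config.coeff, hlam, hsign]

/-- Configurations with the same monomial have the same sign, so monomials never cancel. -/
lemma mem_fullSupp_of_mem_configs {x : Config d n} (hx : x ∈ G.configs) :
    (x.zExp, x.lamExp, G.varExp x) ∈ fullSupp G.dispU := by
  show MvPolynomial.coeff _ ((G.dispU.coeff _).coeff _) ≠ 0
  rw [coeff_coeff_dispU, Finset.sum_congr rfl fun y hy => coeff_eq_of_varExp_eq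
    (Finset.mem_filter.mp hy).1 hx (Finset.mem_filter.mp hy).2.1 (Finset.mem_filter.mp hy).2.2.2,
    Finset.sum_const, nsmul_eq_mul]
  exact mul_ne_zero (Nat.cast_ne_zero.mpr (Finset.card_ne_zero_of_mem
    (Finset.mem_filter.mpr ⟨hx, rfl, rfl, rfl⟩))) x.coeff_ne_zero

end NoCancellation

section Reversal

variable {G : PeriodicGraph d n}

/-- The corresponding configuration of the transpose `L(z)ᵀ - λI = L(z⁻¹) - λI`. -/
def Config.reverse (x : Config d n) : Config d n := ⟨x.1⁻¹, fun j => (x.2 (x.1⁻¹ j)).neg⟩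

lemma isEntryTerm_neg {j i : Fin n} {t : EntryTerm d} :
    G.IsEntryTerm i j t.neg ↔ G.IsEntryTerm j i t := by
  cases t with
  | edge a => exact (G.symm j i a).symm
  | _ => exact eq_comm

lemma reverse_mem_configs {x : Config d n} (hx : x ∈ G.configs) : x.reverse ∈ G.configs :=
  mem_configs.mpr fun j => by
    simpa [Config.reverse, isEntryTerm_neg] using mem_configs.mp hx (x.1⁻¹ j)

lemma zExp_reverse (x : Config d n) : x.reverse.zExp = -x.zExp := by
  rw [Config.zExp, Config.zExp, ← Finset.sum_neg_distrib]
  refine (Equiv.sum_comp x.1⁻¹ fun i => (x.2 i).neg.zExp).trans (Finset.sum_congr rfl fun i _ => ?_)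
  cases x.2 i <;> simp [neg, zExp]

lemma lamExp_reverse (x : Config d n) : x.reverse.lamExp = x.lamExp := by
  rw [Config.lamExp, Config.lamExp]
  refine (Equiv.sum_comp x.1⁻¹ fun i => (x.2 i).neg.lamExp).trans
    (Finset.sum_congr rfl fun i _ => ?_)
  cases x.2 i <;> rfl

lemma neg_mem_genSupp_dispU {p : (Fin d → ℤ) × ℕ} (hp : p ∈ genSupp G.dispU) :
    (-p.1, p.2) ∈ genSupp G.dispU := by
  obtain ⟨μ, hμ⟩ := mem_genSupp_iff_exists_mem_fullSupp.mp hp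
  obtain ⟨x, hx, hz, hlam, -⟩ := G.exists_config_of_mem_fullSupp hμ
  have h := mem_fullSupp_of_mem_configs (reverse_mem_configs hx)
  rw [zExp_reverse, lamExp_reverse, hz, hlam] at h
  exact mem_genSupp_iff_exists_mem_fullSupp.mpr ⟨_, h⟩

end Reversal

lemma eq_zero_of_mem_genSupp_dispU (G : PeriodicGraph d 0) {p : (Fin d → ℤ) × ℕ}
    (hp : p ∈ genSupp G.dispU) : p = 0 := by
  obtain ⟨μ, hμ⟩ := mem_genSupp_iff_exists_mem_fullSupp.mp hp
  obtain ⟨x, -, hz, hlam, -⟩ := G.exists_config_of_mem_fullSupp hμ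
  simp only [Config.zExp, Config.lamExp, Finset.univ_eq_empty, Finset.sum_empty] at hz hlam
  exact Prod.ext hz.symm hlam.symm

section CycleCovers

variable (G : PeriodicGraph d n)

/-- The arc `(v, u, a)` of a cycle cover stands for the term `e_{(u,v),a} z^a` of `L(z)_{u,v}`. -/
def IsArc (a : Fin n × Fin n × (Fin d → ℤ)) : Prop := a.2.2 ∈ G.edges a.2.1 a.1

variable {G}

def coverOfConfig (x : Config d n) (hx : x ∈ G.configs) : CycleCover (Fin n) (Fin d → ℤ) where
  perm := x.1
  carrier := Finset.univ.filter fun v => (x.2 v).IsEdge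
  label v := (x.2 v).zExp
  perm_eq_self v hv := by
    have h := mem_configs.mp hx v
    simp only [Finset.mem_filter, Finset.mem_univ, true_and] at hv
    cases hxv : x.2 v with
    | edge a => rw [hxv] at hv; exact absurd trivial hv
    | _ => rw [hxv] at h; exact h

lemma isArc_of_mem_arcs_coverOfConfig {x : Config d n} (hx : x ∈ G.configs)
    {a : Fin n × Fin n × (Fin d → ℤ)} (ha : a ∈ (coverOfConfig x hx).arcs) : G.IsArc a := by
  obtain ⟨v, hv, rfl⟩ := Multiset.mem_map.mp ha
  have h := mem_configs.mp hx v
  simp only [coverOfConfig, Finset.mem_val, Finset.mem_filter, Finset.mem_univ, true_and] at hv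
  cases hxv : x.2 v with
  | edge a =>
    rw [hxv] at h
    show (x.2 v).zExp ∈ G.edges (x.1 v) v
    rwa [hxv]
  | _ => simp [hxv, IsEdge] at hv

lemma labelSum_arcs_coverOfConfig {x : Config d n} (hx : x ∈ G.configs) :
    labelSum (coverOfConfig x hx).arcs = x.zExp := by
  rw [CycleCover.labelSum_arcs, Config.zExp]
  refine Finset.sum_subset (Finset.subset_univ _) fun v _ hv => ?_
  simp only [coverOfConfig, Finset.mem_filter, Finset.mem_univ, true_and] at hv
  show (x.2 v).zExp = 0
  cases hxv : x.2 v with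
  | edge a => simp [hxv, IsEdge] at hv
  | _ => rfl

lemma notMem_carrier_coverOfConfig {x : Config d n} (hx : x ∈ G.configs) {v : Fin n}
    (h : x.2 v = potential) : v ∉ (coverOfConfig x hx).carrier := by
  show v ∉ Finset.univ.filter fun v => (x.2 v).IsEdge
  rw [Finset.mem_filter, h]
  exact fun hv => hv.2

def configOfCover (K : CycleCover (Fin n) (Fin d → ℤ)) : Config d n :=
  ⟨K.perm, fun v => if v ∈ K.carrier then edge (K.label v) else potential⟩

lemma configOfCover_mem_configs {K : CycleCover (Fin n) (Fin d → ℤ)}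
    (hK : ∀ a ∈ K.arcs, G.IsArc a) : configOfCover K ∈ G.configs := by
  refine mem_configs.mpr fun v => ?_
  by_cases hv : v ∈ K.carrier
  · simpa [configOfCover, hv, IsEntryTerm, IsArc] using
      hK _ (Multiset.mem_map_of_mem (fun v => (v, K.perm v, K.label v)) hv)
  · simpa [configOfCover, hv, IsEntryTerm] using K.perm_eq_self v hv

lemma zExp_configOfCover (K : CycleCover (Fin n) (Fin d → ℤ)) :
    (configOfCover K).zExp = labelSum K.arcs := by
  rw [CycleCover.labelSum_arcs, Config.zExp, ← Finset.sum_subset (Finset.subset_univ K.carrier)]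
  · exact Finset.sum_congr rfl fun v hv => by simp [configOfCover, hv, zExp]
  · intro v _ hv
    simp [configOfCover, hv, zExp]

variable (G) in
/-- The edge terms of all the `x i` form a balanced multigraph of out-degree at most `n - 1`
(vertex `i` has no out-arc in `x i`), which splits into `n - 1` cycle covers; take the lightest. -/
theorem exists_config_mul_le (x : Fin n → Config d n) (hx : ∀ i, x i ∈ G.configs)
    (hpot : ∀ i, (x i).2 i = potential) (ℓ : (Fin d → ℤ) →+ ℤ) :
    ∃ y ∈ G.configs, ((n - 1 : ℕ) : ℤ) * ℓ y.zExp ≤ ∑ i, ℓ (x i).zExp := by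
  let K i := coverOfConfig (x i) (hx i)
  have hdeg : ∀ v, outDeg v (∑ i, (K i).arcs) ≤ n - 1 := by
    simpa using
      CycleCover.outDeg_sum_arcs_le K fun i => notMem_carrier_coverOfConfig (hx i) (hpot i)
  obtain ⟨K', hK'M, hK'⟩ := CycleCover.exists_mul_le (ℓ.comp labelSum) (n - 1)
    (balanced_sum _ fun i _ => (K i).balanced_arcs) hdeg
  have hK'arcs : ∀ a ∈ K'.arcs, G.IsArc a := fun a ha => by
    obtain ⟨i, -, hi⟩ := Multiset.mem_sum.mp (Multiset.mem_of_le hK'M ha)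
    exact isArc_of_mem_arcs_coverOfConfig (hx i) hi
  refine ⟨configOfCover K', configOfCover_mem_configs hK'arcs, ?_⟩
  simpa [zExp_configOfCover, map_sum, K, labelSum_arcs_coverOfConfig] using hK'

end CycleCovers

section Weights

variable {G : PeriodicGraph d n} {w : (Fin d → ℤ) × ℤ}

/-- As the face is proper, some point of the support lies strictly above `m`; its mirror image
under `z ↦ z⁻¹` then lies strictly below `-m`. -/
theorem neg_of_forall_le_dotZ (hw : w.2 = 0) (hproper : face G.dispU w ≠ newton G.dispU) {m : ℤ}
    (hm : ∀ q ∈ genSupp G.dispU, m ≤ dotZ w q) : m < 0 := by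
  obtain ⟨q, hq, hlt⟩ : ∃ q ∈ genSupp G.dispU, m < dotZ w q := by
    by_contra! h
    exact hproper (face_eq_newton_of_forall_dotZ_eq fun p hp => le_antisymm (h p hp) (hm p hp))
  have hneg := hm _ (neg_mem_genSupp_dispU hq)
  rw [dotZ_of_snd_eq_zero hw, dotProduct_neg, ← dotZ_of_snd_eq_zero hw] at hneg
  linarith

theorem nonneg_of_forall_exists_potential (hw : w.2 = 0) (hn : 0 < n) {m : ℤ}
    (hm : ∀ q ∈ genSupp G.dispU, m ≤ dotZ w q)
    (h : ∀ i, ∃ r ∈ fullSupp G.dispU, dotZ w (r.1, r.2.1) ≤ m ∧ r.2.2 (Sum.inl i) ≠ 0) :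
    0 ≤ m := by
  choose r hr hrm hpot using h
  choose x hx hxz _ hxvar using fun i => G.exists_config_of_mem_fullSupp (hr i)
  obtain ⟨y, hy, hyx⟩ := G.exists_config_mul_le x hx
    (fun i => eq_potential_of_varExp_inl_ne_zero (by rw [hxvar i]; exact hpot i))
    (AddMonoidHom.mk' (w.1 ⬝ᵥ ·) fun _ _ => dotProduct_add _ _ _)
  have hmy : m ≤ w.1 ⬝ᵥ y.zExp := by
    have h := hm (y.zExp, y.lamExp)
      (mem_genSupp_iff_exists_mem_fullSupp.mpr ⟨_, mem_fullSupp_of_mem_configs hy⟩)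
    rwa [dotZ_of_snd_eq_zero hw] at h
  have hxm : ∀ i, w.1 ⬝ᵥ (x i).zExp ≤ m := fun i => by
    have h := hrm i
    rwa [dotZ_of_snd_eq_zero hw, ← hxz i] at h
  obtain ⟨k, rfl⟩ := Nat.exists_eq_add_one.mpr hn
  have hsum : ∑ i, w.1 ⬝ᵥ (x i).zExp ≤ (k + 1) * m :=
    (Finset.sum_le_sum fun i _ => hxm i).trans (by simp)
  simp only [AddMonoidHom.mk'_apply, add_tsub_cancel_right] at hyx
  nlinarith [mul_le_mul_of_nonneg_left hmy (Nat.cast_nonneg (α := ℤ) k)]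

end Weights

end PeriodicGraph

open PeriodicGraph in
/-- If `w` identifies a proper vertical face `F = N_w` of
the generic Newton polytope `N = N(D(z,λ))`, then there is a vertex `i ∈ [n]`
such that the facial polynomial `D_w(z,λ)` is independent of the potential
variable `v_i`: every monomial of `D(v,e,z,λ)` whose `(z,λ)`-exponent vector
minimizes `w · ·` over the generic support has `v_i`-degree `0`. -/
theorem facial_independent_of_some_potential {d n : ℕ} (G : PeriodicGraph d n)
    (w : (Fin d → ℤ) × ℤ)
    (hproper : face G.dispU w ≠ newton G.dispU)
    (hvert : IsVertical (face G.dispU w)) :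
    ∃ i : Fin n, ∀ r ∈ fullSupp G.dispU,
      (∀ q ∈ genSupp G.dispU, dotZ w (r.1, r.2.1) ≤ dotZ w q) →
      r.2.2 (Sum.inl i) = 0 := by
  have hw := snd_eq_zero_of_isVertical_face hvert
  rcases Nat.eq_zero_or_pos n with rfl | hn
  · refine absurd (neg_of_forall_le_dotZ hw hproper (m := 0) fun p hp => ?_) (lt_irrefl 0)
    simp [G.eq_zero_of_mem_genSupp_dispU hp, dotZ]
  by_contra! h
  choose r hr hmin hpot using h
  have hm := hmin ⟨0, hn⟩
  refine (neg_of_forall_le_dotZ hw hproper hm).not_ge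
    (nonneg_of_forall_exists_potential hw hn hm fun i => ⟨r i, hr i, ?_, hpot i⟩)
  exact hmin i _ (mem_genSupp_iff_exists_mem_fullSupp.mpr ⟨_, hr ⟨0, hn⟩⟩)
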